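/- arXiv:2510.04007 — 3 statements merged into one kernel-verified Lean document; each statement's English description precedes it below -/
import Mathlib

section
/- Let q be a prime power with characteristic p ≠ 3. Then the cubic polynomial f(x) = a₃x³ + a₂x² + a₁x + a₀ ∈ F_q[x] with a₃ ≠ 0 is a permutation polynomial of F_q if and only if a₂² = 3·a₃·a₁ and q ≡ 2 (mod 3). -/
/-!
Substituting `y = x + a₂ / (3a₃)` turns `f / a₃` into the depressed cubic `y³ + cy` plus a constant,
with `c = 0 ↔ a₂² = 3a₃a₁`; so `f` permutes `F` iff `y ↦ y³ + cy` does. For `c = 0` this is the cube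
map, which permutes `F` iff `3` is prime to `q - 1 = |Fˣ|` (Cauchy's theorem for the converse), i.e.
iff `q ≡ 2 (mod 3)`, as `3 ∤ q`. When `c ≠ 0` it is not injective: since
`(x³ + cx) - (y³ + cy) = (x - y)(x² + xy + y² + c)`, it suffices to find `x ≠ y` with
`x² + xy + y² = -c`. In characteristic 2 take `x = √c, y = 0`; otherwise write `-c = 3s² + d²`,
which is possible over any finite field of odd order, and take `x, y = s ± d` (or `s, -2s` if `d = 0`).
-/

open Function Polynomial

lemma pow_injective_of_coprime_card_units {M₀ : Type*} [GroupWithZero M₀] {n : ℕ} (hn : n ≠ 0)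
    (h : (Nat.card M₀ˣ).Coprime n) : Injective (· ^ n : M₀ → M₀) := by
  intro x y hxy
  simp only at hxy
  by_cases hx : x = 0
  · subst hx
    exact (pow_eq_zero_iff hn |>.mp (hxy.symm.trans (zero_pow hn))).symm
  have hy : y ≠ 0 := by
    rintro rfl
    exact hx (pow_eq_zero_iff hn |>.mp (hxy.trans (zero_pow hn)))
  have := h.pow_left_bijective.injective (a₁ := Units.mk0 x hx) (a₂ := Units.mk0 y hy)
    (Units.ext (by simpa using hxy))
  simpa using congrArg Units.val this

lemma not_injective_pow_of_prime_dvd_card_units {M : Type*} [Monoid M] [Finite Mˣ] {ℓ : ℕ}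
    (hℓ : ℓ.Prime) (h : ℓ ∣ Nat.card Mˣ) : ¬ Injective (· ^ ℓ : M → M) := by
  have := Fact.mk hℓ
  obtain ⟨ζ, hζ⟩ := exists_prime_orderOf_dvd_card' ℓ h
  intro hinj
  have hζ1 : (ζ : M) = 1 := hinj (by simp [← Units.val_pow_eq_pow_val, ← hζ, pow_orderOf_eq_one])
  rw [Units.val_eq_one.mp hζ1, orderOf_one] at hζ
  exact hℓ.one_lt.ne hζ

section FiniteField

variable {F : Type*} [Field F] [Fintype F]

lemma card_mod_three_ne_zero (h3 : (3 : F) ≠ 0) : Fintype.card F % 3 ≠ 0 := by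
  intro hq
  have := Fact.mk Nat.prime_three
  obtain ⟨a, ha⟩ := exists_prime_addOrderOf_dvd_card' (G := F) 3
    (Nat.card_eq_fintype_card (α := F) ▸ Nat.dvd_of_mod_eq_zero hq)
  have h3a : (3 : F) * a = 0 := by
    have hnsmul : 3 • a = 0 := ha ▸ addOrderOf_nsmul_eq_zero a
    rwa [nsmul_eq_mul, Nat.cast_ofNat] at hnsmul
  rw [(mul_eq_zero.mp h3a).resolve_left h3, addOrderOf_zero] at ha
  exact absurd ha (by norm_num)

lemma injective_pow_three_iff (h3 : (3 : F) ≠ 0) :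
    Injective (· ^ 3 : F → F) ↔ Fintype.card F % 3 = 2 := by
  have hq := card_mod_three_ne_zero h3
  have hpos : 0 < Fintype.card F := Fintype.card_pos
  constructor
  · intro hinj
    by_contra hq2
    exact not_injective_pow_of_prime_dvd_card_units (M := F) Nat.prime_three
      (by rw [Nat.card_units, Nat.card_eq_fintype_card]; omega) hinj
  · intro hq2
    refine pow_injective_of_coprime_card_units three_ne_zero ?_
    rw [Nat.card_units, Nat.card_eq_fintype_card, Nat.coprime_comm,
      Nat.Prime.coprime_iff_not_dvd Nat.prime_three]
    omega

lemma not_injective_cube_add_mul_of_ne_zero (h3 : (3 : F) ≠ 0) {c : F} (hc : c ≠ 0) :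
    ¬ Injective (fun y : F => y ^ 3 + c * y) := by
  suffices ∃ x y : F, x ≠ y ∧ x ^ 2 + x * y + y ^ 2 + c = 0 by
    obtain ⟨x, y, hxy, hq⟩ := this
    exact fun hinj => hxy (hinj (by linear_combination (x - y) * hq))
  by_cases hF : ringChar F = 2
  · have h2 : (2 : F) = 0 := by
      exact_mod_cast hF ▸ (ringChar.Nat.cast_ringChar : ((ringChar F : ℕ) : F) = 0)
    obtain ⟨s, hs⟩ := FiniteField.isSquare_of_char_two hF c
    refine ⟨s, 0, fun h => hc (by rw [hs, h, mul_zero]), ?_⟩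
    linear_combination -hs + c * h2
  obtain ⟨d, s, hds⟩ := FiniteField.exists_root_sum_quadratic
    (f := (X ^ 2 : F[X])) (g := C 3 * X ^ 2 + C c)
    (by compute_degree!) (by compute_degree!) (FiniteField.odd_card_of_char_ne_two hF)
  simp only [eval_add, eval_mul, eval_pow, eval_C, eval_X] at hds
  by_cases hd : d = 0
  · subst hd
    have hs : s ≠ 0 := by
      rintro rfl
      exact hc (by linear_combination hds)
    refine ⟨s, -2 * s, fun h => mul_ne_zero h3 hs (by linear_combination h), ?_⟩
    linear_combination hds
  · have h2 : (2 : F) ≠ 0 := Ring.two_ne_zero hF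
    refine ⟨s + d, s - d, fun h => mul_ne_zero h2 hd (by linear_combination h), ?_⟩
    linear_combination hds

lemma injective_cube_add_mul_iff (h3 : (3 : F) ≠ 0) (c : F) :
    Injective (fun y : F => y ^ 3 + c * y) ↔ c = 0 ∧ Fintype.card F % 3 = 2 := by
  by_cases hc : c = 0
  · subst hc
    simpa using injective_pow_three_iff h3
  · exact iff_of_false (not_injective_cube_add_mul_of_ne_zero h3 hc) (fun h => hc h.1)

end FiniteField

lemma bijective_cubic_iff_bijective_depressed {K : Type*} [Field K] (h3 : (3 : K) ≠ 0)
    {a₀ a₁ a₂ a₃ : K} (ha₃ : a₃ ≠ 0) :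
    Bijective (fun x : K => a₃ * x ^ 3 + a₂ * x ^ 2 + a₁ * x + a₀) ↔
      Bijective (fun y : K => y ^ 3 + (3 * a₃ * a₁ - a₂ ^ 2) / (3 * a₃ ^ 2) * y) := by
  set f := fun x : K => a₃ * x ^ 3 + a₂ * x ^ 2 + a₁ * x + a₀
  set g := fun y : K => y ^ 3 + (3 * a₃ * a₁ - a₂ ^ 2) / (3 * a₃ ^ 2) * y
  set t := a₂ / (3 * a₃)
  have hf : f = (fun z => a₃ * z + f (-t)) ∘ g ∘ (· + t) := by
    funext x
    simp only [f, g, t, comp_apply]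
    field_simp
    ring
  have hout : Bijective (fun z => a₃ * z + f (-t)) :=
    (Equiv.addRight (f (-t))).bijective.comp (Equiv.mulLeft₀ a₃ ha₃).bijective
  rw [hf, hout.of_comp_iff']
  exact Bijective.of_comp_iff g (Equiv.addRight t).bijective

/-- Permutation polynomial criterion for cubics over finite fields of characteristic ≠ 3
(Mullen–Shparlinski style): `a₃x³+a₂x²+a₁x+a₀` with `a₃ ≠ 0` permutes `F_q` iff
`a₂² = 3a₃a₁` and `q ≡ 2 (mod 3)`. -/
theorem cubic_permutation_polynomial_iff
    {F : Type*} [Field F] [Fintype F] (p : ℕ) [Fact p.Prime] [CharP F p] (hp : p ≠ 3)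
    (a₀ a₁ a₂ a₃ : F) (ha₃ : a₃ ≠ 0) :
    Function.Bijective (fun x : F => a₃ * x ^ 3 + a₂ * x ^ 2 + a₁ * x + a₀) ↔
      (a₂ ^ 2 = 3 * a₃ * a₁ ∧ Fintype.card F % 3 = 2) := by
  have h3 : (3 : F) ≠ 0 := by
    have hp3 : ¬ p ∣ 3 := by rwa [Nat.prime_dvd_prime_iff_eq Fact.out Nat.prime_three]
    exact_mod_cast (CharP.cast_eq_zero_iff F p 3).not.mpr hp3
  rw [bijective_cubic_iff_bijective_depressed h3 ha₃, ← Finite.injective_iff_bijective,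
    injective_cube_add_mul_iff h3, div_eq_zero_iff, or_iff_left (by simp [h3, ha₃]), sub_eq_zero,
    eq_comm]
end

section
/- For any finite field F_q of odd characteristic, the map η : F_q → F_q defined by η(x) = x³ + x² + x is not a bijection. Consequently, there exists c ∈ F_q such that the polynomial x³ + x² + x + c is irreducible over F_q, provided q ≥ 7. -/
/-!
`η(x) - η(y) = (x - y) Q(x, y)` with `Q(x, y) = x² + xy + y² + x + y + 1`, so `η` fails to be
injective as soon as the conic `Q = 0` has a point: off the diagonal it is a collision, on the
diagonal it is a critical point `x`, and then `η(-1 - 2x) = η(x)`. Completing the square,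
`4Q = (2x + y + 1)² + (3y² + 2y + 3)`, and a sum of two quadratics in separate variables always
vanishes somewhere over a finite field of odd order (in characteristic 3, `Q(1, 0) = 0`).
A non-injective self-map of a finite set misses some `b`, and then `x³ + x² + x - b` is a cubic
without roots, hence irreducible.
-/

open Polynomial hiding eta

def eta {R : Type*} [Semiring R] (x : R) : R := x ^ 3 + x ^ 2 + x

section CommRing

variable {R : Type*} [CommRing R]

theorem eta_sub_eta (x y : R) :
    eta x - eta y = (x - y) * (x ^ 2 + x * y + y ^ 2 + x + y + 1) := by
  unfold eta; ring

theorem eta_eq_eta_of_conic {x y : R} (h : x ^ 2 + x * y + y ^ 2 + x + y + 1 = 0) :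
    eta x = eta y :=
  sub_eq_zero.mp (by rw [eta_sub_eta, h, mul_zero])

end CommRing

theorem not_injective_eta_of_conic {F : Type*} [Field F] (h2 : (2 : F) ≠ 0) {x y : F}
    (h : x ^ 2 + x * y + y ^ 2 + x + y + 1 = 0) : ¬ Function.Injective (eta : F → F) := by
  intro hinj
  obtain rfl : x = y := hinj (eta_eq_eta_of_conic h)
  have hcrit : 3 * x ^ 2 + 2 * x + 1 = 0 := by linear_combination h
  have hpartner : (-1 - 2 * x) ^ 2 + (-1 - 2 * x) * x + x ^ 2 + (-1 - 2 * x) + x + 1 = 0 := by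
    linear_combination hcrit
  have hx : -1 - 2 * x = x := hinj (eta_eq_eta_of_conic hpartner)
  exact h2 (by linear_combination 3 * hcrit + (3 * x + 1) * hx)

theorem exists_conic_point {F : Type*} [Field F] [Fintype F] (hF : ringChar F ≠ 2) :
    ∃ x y : F, x ^ 2 + x * y + y ^ 2 + x + y + 1 = 0 := by
  by_cases h3 : (3 : F) = 0
  · exact ⟨1, 0, by linear_combination h3⟩
  have hg : (C 3 * X ^ 2 + C 2 * X + C 3 : F[X]).degree = 2 := by compute_degree!
  obtain ⟨a, b, hab⟩ := FiniteField.exists_root_sum_quadratic (degree_X_pow 2) hg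
    (FiniteField.odd_card_of_char_ne_two hF)
  simp only [eval_add, eval_mul, eval_pow, eval_X, eval_C] at hab
  have h2 : (2 : F) ≠ 0 := Ring.two_ne_zero hF
  refine ⟨(a - b - 1) / 2, b, ?_⟩
  field_simp
  linear_combination hab

theorem not_injective_eta {F : Type*} [Field F] [Fintype F] (hF : ringChar F ≠ 2) :
    ¬ Function.Injective (eta : F → F) :=
  let ⟨_, _, h⟩ := exists_conic_point hF
  not_injective_eta_of_conic (Ring.two_ne_zero hF) h

theorem irreducible_X_pow_three_add_X_sq_add_X_add_C {F : Type*} [Field F] {c : F}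
    (hc : ∀ x, eta x ≠ -c) : Irreducible (X ^ 3 + X ^ 2 + X + C c : F[X]) := by
  have hdeg : (X ^ 3 + X ^ 2 + X + C c : F[X]).natDegree = 3 := by compute_degree!
  refine irreducible_of_degree_le_three_of_not_isRoot (by simp [hdeg]) fun x hx => hc x ?_
  simp only [IsRoot.def, eval_add, eval_pow, eval_X, eval_C] at hx
  unfold eta
  linear_combination hx

theorem eta_not_bijective_and_exists_irreducible_cubic_general
    {F : Type*} [Field F] [Fintype F] (p : ℕ) [CharP F p] (hp : Odd p) :
    ¬ Function.Bijective (fun x : F => x ^ 3 + x ^ 2 + x) ∧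
      (7 ≤ Fintype.card F →
        ∃ c : F, Irreducible
          (Polynomial.X ^ 3 + Polynomial.X ^ 2 + Polynomial.X + Polynomial.C c :
            Polynomial F)) := by
  have hF : ringChar F ≠ 2 := by
    rw [ringChar.eq F p]
    rintro rfl
    exact Nat.not_even_iff_odd.mpr hp even_two
  have hinj := not_injective_eta hF
  refine ⟨fun h => hinj h.1, fun _ => ?_⟩
  obtain ⟨b, hb⟩ : ∃ b, ∀ x, eta x ≠ b := by
    simpa [Finite.injective_iff_surjective, Function.Surjective] using hinj
  exact ⟨-b, irreducible_X_pow_three_add_X_sq_add_X_add_C (by simpa using hb)⟩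

/-- Over any finite field of odd characteristic, `x ↦ x³+x²+x` is not a bijection;
consequently (if `q ≥ 7`) there is `c` with `x³+x²+x+c` irreducible over `F_q`. -/
theorem eta_not_bijective_and_exists_irreducible_cubic
    {F : Type*} [Field F] [Fintype F] (p : ℕ) [Fact p.Prime] [CharP F p] (hp : Odd p) :
    ¬ Function.Bijective (fun x : F => x ^ 3 + x ^ 2 + x) ∧
      (7 ≤ Fintype.card F →
        ∃ c : F, Irreducible
          (Polynomial.X ^ 3 + Polynomial.X ^ 2 + Polynomial.X + Polynomial.C c :
            Polynomial F)) :=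
  eta_not_bijective_and_exists_irreducible_cubic_general p hp
end

section
/- Let q ≥ 7 be a prime power and let M be a subgroup of GL₃(F_q) acting irreducibly on F_q³, such that q² divides |M| and the determinant map det : M → F_q^× is surjective. If M contains a Sylow p-subgroup of GL₃(F_q) (where p is the characteristic of F_q), then M contains SL₃(F_q) and hence M = GL₃(F_q). -/
/-!
After conjugating `M`, the Sylow `p`-subgroup it contains may be taken to contain the upper
unitriangular group `U`. Conjugation by `g` carries the transvections `x ↦ x + χ(x) v` with a
given functional `χ` to those with functional `χ ∘ g`. `U` supplies all transvections with
`χ = e₂*`; irreducibility gives `g ∈ M` with `g₂₀ ≠ 0`, so `e₂* ∘ g` has nonzero `0`-th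
coordinate, and conjugating further by `U` and by one transvection reaches every `χ`. Since
transvections generate `SL₃`, `ker det ≤ M`, and surjectivity of `det` on `M` gives `M = GL₃`.
-/

open Matrix Pointwise

section Transvection

variable {n R : Type*} [Fintype n] [CommRing R]

lemma vecMulVec_mul_self_eq_zero {v χ : n → R} (h : χ ⬝ᵥ v = 0) :
    vecMulVec v χ * vecMulVec v χ = 0 := by
  rw [vecMulVec_mul_vecMulVec, h, zero_smul, vecMulVec_zero]

variable [DecidableEq n]

def glTransvection (v χ : n → R) (h : χ ⬝ᵥ v = 0) : GL n R where
  val := 1 + vecMulVec v χ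
  inv := 1 - vecMulVec v χ
  val_inv := by simp [add_mul, mul_sub, vecMulVec_mul_self_eq_zero h]
  inv_val := by simp [sub_mul, mul_add, vecMulVec_mul_self_eq_zero h]

@[simp]
lemma coe_glTransvection (v χ : n → R) (h : χ ⬝ᵥ v = 0) :
    (glTransvection v χ h : Matrix n n R) = 1 + vecMulVec v χ := rfl

lemma inv_mul_glTransvection_mul (g : GL n R) {u χ : n → R}
    (h : χ ⬝ᵥ (g : Matrix n n R) *ᵥ u = 0) :
    g⁻¹ * glTransvection ((g : Matrix n n R) *ᵥ u) χ h * g =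
      glTransvection u (χ ᵥ* g) (by rwa [← dotProduct_mulVec]) := by
  ext : 1
  simp [mul_add, add_mul, mul_vecMulVec, vecMulVec_mul, mulVec_mulVec]

lemma glTransvection_smul_left (s : R) {u χ : n → R} (h : χ ⬝ᵥ s • u = 0) :
    glTransvection (s • u) χ h =
      glTransvection u (s • χ) (by rwa [smul_dotProduct, ← dotProduct_smul]) := by
  ext : 1
  simp [smul_vecMulVec, vecMulVec_smul]

lemma glTransvection_zero_right (u : n → R) (h : (0 : n → R) ⬝ᵥ u = 0) :
    glTransvection u 0 h = 1 := by
  ext : 1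
  simp

lemma transvection_eq_coe_glTransvection {i j : n} (hij : i ≠ j) (c : R) :
    transvection i j c =
      glTransvection (Pi.single i c) (Pi.single j 1) (by simp [Ne.symm hij]) := by
  ext k l
  rcases eq_or_ne k i with rfl | hk <;> rcases eq_or_ne l j with rfl | hl <;>
    simp [transvection, vecMulVec_apply, one_apply, *, Ne.symm]

def ContainsTransvections (M : Subgroup (GL n R)) (χ : n → R) : Prop :=
  ∀ u (h : χ ⬝ᵥ u = 0), glTransvection u χ h ∈ M

namespace ContainsTransvections

variable {M : Subgroup (GL n R)} {χ : n → R}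

lemma vecMul (hχ : ContainsTransvections M χ) {g : GL n R} (hg : g ∈ M) :
    ContainsTransvections M (χ ᵥ* g) := by
  intro u h
  have h' : χ ⬝ᵥ (g : Matrix n n R) *ᵥ u = 0 := by rwa [dotProduct_mulVec]
  rw [← inv_mul_glTransvection_mul g h']
  exact mul_mem (mul_mem (inv_mem hg) (hχ _ h')) hg

lemma of_vecMul {g : GL n R} (hχ : ContainsTransvections M (χ ᵥ* g)) (hg : g ∈ M) :
    ContainsTransvections M χ := by
  simpa [vecMul_vecMul] using hχ.vecMul (inv_mem hg)

lemma smul (hχ : ContainsTransvections M χ) (s : R) : ContainsTransvections M (s • χ) := by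
  intro u h
  have h' : χ ⬝ᵥ s • u = 0 := by rwa [dotProduct_smul, ← smul_dotProduct]
  rw [← glTransvection_smul_left s h']
  exact hχ _ h'

lemma zero : ContainsTransvections M 0 := fun u h => by
  rw [glTransvection_zero_right]
  exact one_mem M

end ContainsTransvections

lemma containsTransvections_of_apply_ne_zero [Nontrivial R] {M : Subgroup (GL n R)} (i : n)
    (h : ∀ χ : n → R, χ i ≠ 0 → ContainsTransvections M χ) (χ : n → R) :
    ContainsTransvections M χ := by
  by_cases hχi : χ i ≠ 0
  · exact h χ hχi
  obtain rfl | ⟨k, hk⟩ : χ = 0 ∨ ∃ k, χ k ≠ 0 := by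
    by_contra! hcon
    exact hcon.1 (funext hcon.2)
  · exact ContainsTransvections.zero
  have hki : k ≠ i := by rintro rfl; exact hχi hk
  have hdot : Pi.single i (1 : R) ⬝ᵥ Pi.single k 1 = 0 := by simp [hki]
  -- conjugating by `x ↦ x + xᵢ eₖ` replaces `χ` by `χ + χₖ eᵢ`, whose `i`-th entry is `χₖ ≠ 0`
  have hg := h _ (by simp) _ hdot
  refine ContainsTransvections.of_vecMul (h _ ?_) hg
  simpa [vecMul_add, vecMul_vecMulVec, not_not.1 hχi] using hk

lemma transvection_mem_map_coe {M : Subgroup (GL n R)}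
    (hM : ∀ χ, ContainsTransvections M χ) {i j : n} (hij : i ≠ j) (c : R) :
    transvection i j c ∈ M.toSubmonoid.map (Units.coeHom (Matrix n n R)) := by
  rw [transvection_eq_coe_glTransvection hij c]
  exact ⟨_, hM _ _ (by simp [Ne.symm hij]), rfl⟩

end Transvection

section Steinberg

variable {n F : Type*} [Fintype n] [DecidableEq n] [Field F]

lemma transvection_mul_transvection_mul_transvection {i j : n} (hij : i ≠ j) {a : F}
    (ha : a ≠ 0) :
    transvection i j a * transvection j i (-a⁻¹) * transvection i j a =
      1 - single i i 1 - single j j 1 + single i j a - single j i a⁻¹ := by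
  simp only [transvection, add_mul, mul_add, one_mul, mul_one, single_mul_single_same,
    single_mul_single_of_ne, ne_eq, hij.symm, not_false_eq_true, mul_neg, neg_mul,
    mul_inv_cancel₀ ha, inv_mul_cancel₀ ha, ← single_neg, sub_eq_add_neg]
  abel

-- the Steinberg relation `h(a) = w(a) w(-1)`, with `w(a) = x_ij(a) x_ji(-a⁻¹) x_ij(a)`
lemma diagonal_update_update_eq {i j : n} (hij : i ≠ j) {a : F} (ha : a ≠ 0) :
    diagonal (Function.update (Function.update 1 i a) j a⁻¹) =
      transvection i j a * transvection j i (-a⁻¹) * transvection i j a *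
        (transvection i j (-1) * transvection j i 1 * transvection i j (-1)) := by
  have h₁ := transvection_mul_transvection_mul_transvection hij (a := (-1 : F)) (by simp)
  rw [inv_neg, inv_one, neg_neg] at h₁
  rw [transvection_mul_transvection_mul_transvection hij ha, h₁]
  have : (1 - single i i 1 - single j j 1 + single i j a - single j i a⁻¹ : Matrix n n F) *
      (1 - single i i 1 - single j j 1 + single i j (-1) - single j i (-1)) =
      1 - single i i 1 - single j j 1 + single i i a + single j j a⁻¹ := by
    simp only [sub_eq_add_neg, add_mul, mul_add, neg_mul, mul_neg, one_mul, mul_one,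
      single_mul_single_same, single_mul_single_of_ne, ne_eq, hij.symm, hij,
      not_false_eq_true, neg_zero, add_zero]
    simp only [neg_neg, ← single_neg]
    abel
  rw [this]
  ext k l
  simp only [Matrix.add_apply, Matrix.sub_apply, one_apply, single_apply, diagonal_apply,
    Function.update_apply, Pi.one_apply]
  split_ifs <;> grind

lemma diagonal_update_update_mem {S : Submonoid (Matrix n n F)}
    (hS : ∀ i j : n, i ≠ j → ∀ c, transvection i j c ∈ S) {i j : n} (hij : i ≠ j) {a : F}
    (ha : a ≠ 0) : diagonal (Function.update (Function.update 1 i a) j a⁻¹) ∈ S := by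
  rw [diagonal_update_update_eq hij ha]
  have h := hS i j hij
  have h' := hS j i hij.symm
  exact S.mul_mem (S.mul_mem (S.mul_mem (h _) (h' _)) (h _))
    (S.mul_mem (S.mul_mem (h _) (h' _)) (h _))

end Steinberg

section Unitriangular

variable {R : Type*} [CommRing R]

def unitriangular (a b c : R) : GL (Fin 3) R where
  val := !![1, a, b; 0, 1, c; 0, 0, 1]
  inv := !![1, -a, a * c - b; 0, 1, -c; 0, 0, 1]
  val_inv := by
    ext i j
    fin_cases i <;> fin_cases j <;> simp [mul_apply, Fin.sum_univ_three]
    ring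
  inv_val := by
    ext i j
    fin_cases i <;> fin_cases j <;> simp [mul_apply, Fin.sum_univ_three]
    ring

@[simp]
lemma coe_unitriangular (a b c : R) :
    (unitriangular a b c : Matrix (Fin 3) (Fin 3) R) = !![1, a, b; 0, 1, c; 0, 0, 1] := rfl

lemma unitriangular_mul (a b c a' b' c' : R) :
    unitriangular a b c * unitriangular a' b' c' =
      unitriangular (a + a') (b + b' + a * c') (c + c') := by
  ext i j
  fin_cases i <;> fin_cases j <;> simp [mul_apply, Fin.sum_univ_three] <;> ring

lemma unitriangular_zero : unitriangular (0 : R) 0 0 = 1 := by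
  ext i j
  fin_cases i <;> fin_cases j <;> rfl

lemma unitriangular_inv (a b c : R) :
    (unitriangular a b c)⁻¹ = unitriangular (-a) (a * c - b) (-c) := by
  rw [inv_eq_iff_mul_eq_one, unitriangular_mul, ← unitriangular_zero]
  congr 1 <;> ring

def upperUnitriangular : Subgroup (GL (Fin 3) R) where
  carrier := {g | ∃ a b c, unitriangular a b c = g}
  one_mem' := ⟨0, 0, 0, unitriangular_zero⟩
  mul_mem' := by
    rintro _ _ ⟨a, b, c, rfl⟩ ⟨a', b', c', rfl⟩
    exact ⟨_, _, _, (unitriangular_mul a b c a' b' c').symm⟩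
  inv_mem' := by
    rintro _ ⟨a, b, c, rfl⟩
    exact ⟨_, _, _, (unitriangular_inv a b c).symm⟩

lemma unitriangular_mem_upperUnitriangular (a b c : R) :
    unitriangular a b c ∈ upperUnitriangular := ⟨a, b, c, rfl⟩

lemma unitriangular_pow_char_sq (p : ℕ) [Fact p.Prime] [CharP R p] (a b c : R) :
    unitriangular a b c ^ p ^ 2 = 1 := by
  set N : Matrix (Fin 3) (Fin 3) R := !![0, a, b; 0, 0, c; 0, 0, 0]
  have hN : (unitriangular a b c : Matrix (Fin 3) (Fin 3) R) = 1 + N := by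
    ext i j
    fin_cases i <;> fin_cases j <;> simp [N]
  have hN3 : N ^ 3 = 0 := by
    ext i j
    fin_cases i <;> fin_cases j <;> simp [N, pow_succ, mul_apply, Fin.sum_univ_three]
  have hp : 3 ≤ p ^ 2 := by nlinarith [(Fact.out : p.Prime).two_le]
  ext : 1
  rw [Units.val_pow_eq_pow_val, hN, add_pow_char_pow_of_commute _ _ (Commute.one_left N),
    one_pow, pow_eq_zero_of_le hp hN3, add_zero, Units.val_one]

lemma isPGroup_upperUnitriangular (p : ℕ) [Fact p.Prime] [CharP R p] :
    IsPGroup p (upperUnitriangular (R := R)) := by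
  rintro ⟨_, a, b, c, rfl⟩
  exact ⟨2, Subtype.ext (unitriangular_pow_char_sq p a b c)⟩

end Unitriangular

section Irreducible

variable {n F : Type*} [Fintype n] [DecidableEq n] [Field F]

def ActsIrreducibly (M : Subgroup (GL n F)) : Prop :=
  ∀ W : Submodule F (n → F), (∀ g ∈ M, ∀ v ∈ W, (g : Matrix n n F) *ᵥ v ∈ W) → W = ⊥ ∨ W = ⊤

namespace ActsIrreducibly

variable {M : Subgroup (GL n F)}

lemma conj_smul (hM : ActsIrreducibly M) (c : GL n F) :
    ActsIrreducibly (MulAut.conj c • M) := by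
  intro W hW
  have mulVec_inv_mul (v : n → F) :
      (c : Matrix n n F) *ᵥ ((c⁻¹ : GL n F) : Matrix n n F) *ᵥ v = v := by
    rw [mulVec_mulVec, ← Units.val_mul, mul_inv_cancel, Units.val_one, one_mulVec]
  let W₀ : Submodule F (n → F) := W.comap (mulVecLin (c : Matrix n n F))
  have hW₀ : ∀ g ∈ M, ∀ v ∈ W₀, (g : Matrix n n F) *ᵥ v ∈ W₀ := by
    intro g hg v hv
    have := hW _ (Subgroup.smul_mem_pointwise_smul g (MulAut.conj c) M hg) _ hv
    simpa [W₀, mulVec_mulVec, mul_assoc] using this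
  rcases hM W₀ hW₀ with h | h
  · refine Or.inl (eq_bot_iff.2 fun v hv => ?_)
    have : ((c⁻¹ : GL n F) : Matrix n n F) *ᵥ v ∈ W₀ := by simpa [W₀, mulVec_inv_mul] using hv
    rw [h, Submodule.mem_bot] at this
    rw [Submodule.mem_bot, ← mulVec_inv_mul v, this, mulVec_zero]
  · refine Or.inr (eq_top_iff.2 fun v _ => ?_)
    have : ((c⁻¹ : GL n F) : Matrix n n F) *ᵥ v ∈ W₀ := h ▸ Submodule.mem_top
    simpa [W₀, mulVec_inv_mul] using this

lemma exists_mem_apply_ne_zero (hM : ActsIrreducibly M) (i j : n) :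
    ∃ g ∈ M, (g : Matrix n n F) i j ≠ 0 := by
  by_contra! h
  let W : Submodule F (n → F) :=
    { carrier := {v | ∀ g ∈ M, ((g : Matrix n n F) *ᵥ v) i = 0}
      add_mem' := fun hu hv g hg => by simp [mulVec_add, hu g hg, hv g hg]
      zero_mem' := fun g _ => by simp
      smul_mem' := fun s v hv g hg => by simp [mulVec_smul, hv g hg] }
  have hW : ∀ g ∈ M, ∀ v ∈ W, (g : Matrix n n F) *ᵥ v ∈ W := by
    intro g hg v hv g' hg'
    simpa [mulVec_mulVec] using hv _ (mul_mem hg' hg)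
  have hj : Pi.single j 1 ∈ W := fun g hg => by simp [h g hg]
  have hi : Pi.single i 1 ∉ W := fun hi => by simpa using hi 1 (one_mem M)
  rcases hM W hW with hbot | htop
  · rw [hbot, Submodule.mem_bot] at hj
    simpa using congrFun hj j
  · exact hi (htop ▸ Submodule.mem_top)

end ActsIrreducibly

end Irreducible

section GL3

variable {F : Type*} [Field F] {M : Subgroup (GL (Fin 3) F)}

lemma containsTransvections_single_two (hU : upperUnitriangular ≤ M) :
    ContainsTransvections M (Pi.single 2 1) := by
  intro u hu
  have hu2 : u 2 = 0 := by simpa using hu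
  convert hU (unitriangular_mem_upperUnitriangular 0 (u 0) (u 1))
  ext i j
  fin_cases i <;> fin_cases j <;> simp [vecMulVec_apply, one_apply, hu2]

lemma containsTransvections_of_apply_zero_ne_zero (hU : upperUnitriangular ≤ M)
    {ψ χ : Fin 3 → F} (hψ : ContainsTransvections M ψ) (hψ0 : ψ 0 ≠ 0) (hχ0 : χ 0 ≠ 0) :
    ContainsTransvections M χ := by
  set r := ψ 0 / χ 0
  have hr : r ≠ 0 := div_ne_zero hψ0 hχ0
  set g := unitriangular ((r * χ 1 - ψ 1) / ψ 0) ((r * χ 2 - ψ 2) / ψ 0) 0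
  have key : ψ ᵥ* g = r • χ := by
    funext k
    fin_cases k <;> simp [g, vecMul, dotProduct, Fin.sum_univ_three, r] <;> field_simp <;> ring
  have := (hψ.vecMul (hU (unitriangular_mem_upperUnitriangular _ _ _) : g ∈ M)).smul r⁻¹
  rwa [key, smul_smul, inv_mul_cancel₀ hr, one_smul] at this

lemma forall_containsTransvections (hM : ActsIrreducibly M) (hU : upperUnitriangular ≤ M)
    (χ : Fin 3 → F) : ContainsTransvections M χ := by
  obtain ⟨g, hg, hg20⟩ := hM.exists_mem_apply_ne_zero 2 0
  have hψ := (containsTransvections_single_two hU).vecMul hg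
  refine containsTransvections_of_apply_ne_zero 0
    (fun χ hχ => containsTransvections_of_apply_zero_ne_zero hU hψ ?_ hχ) χ
  simpa [single_vecMul] using hg20

lemma diagonal_mem_of_det_eq_one {S : Submonoid (Matrix (Fin 3) (Fin 3) F)}
    (hS : ∀ i j : Fin 3, i ≠ j → ∀ c, transvection i j c ∈ S) {D : Fin 3 → F}
    (hD : (diagonal D).det = 1) : diagonal D ∈ S := by
  rw [det_diagonal, Fin.prod_univ_three] at hD
  have h0 : D 0 ≠ 0 := left_ne_zero_of_mul (left_ne_zero_of_mul_eq_one hD)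
  have h01 : D 0 * D 1 ≠ 0 := left_ne_zero_of_mul_eq_one hD
  have : diagonal D = diagonal (Function.update (Function.update 1 0 (D 0)) 1 (D 0)⁻¹) *
      diagonal (Function.update (Function.update 1 1 (D 0 * D 1)) 2 (D 0 * D 1)⁻¹) := by
    rw [diagonal_mul_diagonal]
    congr 1
    funext k
    fin_cases k <;> simp
    · field_simp
    · rw [eq_inv_of_mul_eq_one_right hD, _root_.mul_inv_rev]
  rw [this]
  exact S.mul_mem (diagonal_update_update_mem hS (by decide) h0)
    (diagonal_update_update_mem hS (by decide) h01)

lemma ker_det_le_of_forall_containsTransvections (hM : ∀ χ, ContainsTransvections M χ) :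
    (GeneralLinearGroup.det : GL (Fin 3) F →* Fˣ).ker ≤ M := by
  intro g hg
  set S := M.toSubmonoid.map (Units.coeHom (Matrix (Fin 3) (Fin 3) F))
  have hS : ∀ i j : Fin 3, i ≠ j → ∀ c, transvection i j c ∈ S :=
    fun _ _ hij c => transvection_mem_map_coe hM hij c
  have hdet : (g : Matrix (Fin 3) (Fin 3) F).det = 1 := by
    rw [← GeneralLinearGroup.val_det_apply, MonoidHom.mem_ker.1 hg, Units.val_one]
  obtain ⟨x, hx, hxg⟩ : (g : Matrix (Fin 3) (Fin 3) F) ∈ S :=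
    diagonal_transvection_induction (· ∈ S) _
      (fun _ hD => diagonal_mem_of_det_eq_one hS (hD.trans hdet))
      (fun t => hS t.i t.j t.hij t.c) (fun _ _ => S.mul_mem)
  rwa [Units.ext hxg] at hx

end GL3

theorem irreducible_subgroup_with_sylow_eq_top_general
    {F : Type*} [Field F] [Fintype F]
    (p : ℕ) [Fact p.Prime] [CharP F p]
    (M : Subgroup (Matrix.GeneralLinearGroup (Fin 3) F))
    (hirr : ∀ W : Submodule F (Fin 3 → F),
      (∀ g ∈ M, ∀ v ∈ W, Matrix.mulVec (g : Matrix (Fin 3) (Fin 3) F) v ∈ W) →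
      W = ⊥ ∨ W = ⊤)
    (hdet : ∀ u : Fˣ, ∃ g ∈ M, Matrix.GeneralLinearGroup.det g = u)
    (hsyl : ∃ P : Sylow p (Matrix.GeneralLinearGroup (Fin 3) F), (P : Subgroup _) ≤ M) :
    MonoidHom.ker
        (Matrix.GeneralLinearGroup.det :
          Matrix.GeneralLinearGroup (Fin 3) F →* Fˣ) ≤ M ∧ M = ⊤ := by
  obtain ⟨P, hPM⟩ := hsyl
  obtain ⟨Q, hUQ⟩ := (isPGroup_upperUnitriangular (R := F) p).exists_le_sylow
  obtain ⟨c, rfl⟩ := MulAction.exists_smul_eq (GL (Fin 3) F) P Q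
  have hU : upperUnitriangular ≤ MulAut.conj c • M := by
    rw [Sylow.coe_subgroup_smul] at hUQ
    exact hUQ.trans (Subgroup.pointwise_smul_le_pointwise_smul_iff.2 hPM)
  have hker : (GeneralLinearGroup.det : GL (Fin 3) F →* Fˣ).ker ≤ M := by
    rw [← Subgroup.pointwise_smul_le_pointwise_smul_iff (a := MulAut.conj c),
      Subgroup.Normal.conj_smul_eq_self]
    exact ker_det_le_of_forall_containsTransvections
      (forall_containsTransvections (ActsIrreducibly.conj_smul hirr c) hU)
  have hmap : M.map (GeneralLinearGroup.det : GL (Fin 3) F →* Fˣ) = ⊤ :=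
    eq_top_iff.2 fun u _ => hdet u
  refine ⟨hker, ?_⟩
  rw [← sup_eq_left.2 hker, ← Subgroup.comap_map_eq, hmap, Subgroup.comap_top]

/-- An irreducible subgroup `M ≤ GL₃(F_q)` (`q ≥ 7`) with `q² ∣ |M|`, surjective
determinant, containing a Sylow `p`-subgroup of `GL₃(F_q)`, contains `SL₃(F_q)` and
hence equals `GL₃(F_q)`. -/
theorem irreducible_subgroup_with_sylow_eq_top
    {F : Type*} [Field F] [Fintype F] [DecidableEq F]
    (p : ℕ) [Fact p.Prime] [CharP F p] (hq : 7 ≤ Fintype.card F)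
    (M : Subgroup (Matrix.GeneralLinearGroup (Fin 3) F))
    (hirr : ∀ W : Submodule F (Fin 3 → F),
      (∀ g ∈ M, ∀ v ∈ W, Matrix.mulVec (g : Matrix (Fin 3) (Fin 3) F) v ∈ W) →
      W = ⊥ ∨ W = ⊤)
    (hcard : Fintype.card F ^ 2 ∣ Nat.card M)
    (hdet : ∀ u : Fˣ, ∃ g ∈ M, Matrix.GeneralLinearGroup.det g = u)
    (hsyl : ∃ P : Sylow p (Matrix.GeneralLinearGroup (Fin 3) F), (P : Subgroup _) ≤ M) :
    MonoidHom.ker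
        (Matrix.GeneralLinearGroup.det :
          Matrix.GeneralLinearGroup (Fin 3) F →* Fˣ) ≤ M ∧ M = ⊤ :=
  irreducible_subgroup_with_sylow_eq_top_general p M hirr hdet hsyl
end
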